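/- Let a, b, s, t be positive integers with a < s ≤ t ≤ b. Then every K_{s,t}-free graph G on n vertices satisfies N(K_{a,b}, G) ≤ C(s-1,a)·C(n,b), where C(m,k) denotes the binomial coefficient; in particular, in such a graph any set of b vertices has at most s-1 common neighbors. -/

import Mathlib

/-!
A set `B` of at least `t` vertices has fewer than `s` common neighbours, since `s` of them
together with `t` vertices of `B` would span a `K_{s,t}`. A copy of `K_{a,b}` is determined by
its two parts `(A, B)`, and `A` is an `a`-subset of the common neighbours of the `b`-set `B`;
summing over the `C(n, b)` choices of `B` gives the bound.
-/

open SimpleGraph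

/-- `F` is contained in `G` as a subgraph, i.e. there is an injective graph
homomorphism from `F` to `G`. -/
def ContainsCopy {α β : Type*} (F : SimpleGraph α) (G : SimpleGraph β) : Prop :=
  ∃ f : F →g G, Function.Injective f

/-- `N(H,G)`: the number of subgraphs of `G` isomorphic to `H`. -/
noncomputable def copyCountSub {α β : Type*} (H : SimpleGraph α) (G : SimpleGraph β) : ℕ :=
  Nat.card {G' : G.Subgraph // Nonempty (H ≃g G'.coe)}

/-- `ex(n,H,F)`: the maximum number of copies of `H` in an `F`-free graph on `n` vertices. -/
noncomputable def exGen (n : ℕ) {α β : Type*} (H : SimpleGraph α) (F : SimpleGraph β) : ℕ :=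
  sSup {m | ∃ G : SimpleGraph (Fin n), ¬ ContainsCopy F G ∧ m = copyCountSub H G}

/-- The complete bipartite graph `K_{a,b}`. -/
abbrev Kbip (a b : ℕ) : SimpleGraph (Fin a ⊕ Fin b) := completeBipartiteGraph (Fin a) (Fin b)

/-- `K̄_{a,b}`: obtained from `K_{a,b}` by adding all edges inside the part of size `a`. -/
def KbipBar (a b : ℕ) : SimpleGraph (Fin a ⊕ Fin b) :=
  SimpleGraph.fromRel (fun u _ => u.isLeft)

/-- `k` vertex-disjoint copies of `G`. -/
def disjCopies (k : ℕ) {α : Type*} (G : SimpleGraph α) : SimpleGraph (Fin k × α) :=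
  SimpleGraph.fromRel (fun u v => u.1 = v.1 ∧ G.Adj u.2 v.2)

/-- The vertex-disjoint union of `G` and `H`. -/
def disjSum {α β : Type*} (G : SimpleGraph α) (H : SimpleGraph β) : SimpleGraph (α ⊕ β) :=
  SimpleGraph.fromRel (fun u v =>
    (∃ x y, u = Sum.inl x ∧ v = Sum.inl y ∧ G.Adj x y) ∨
    (∃ x y, u = Sum.inr x ∧ v = Sum.inr y ∧ H.Adj x y))

/-- Placing a graph `G0` on the `Fin b`-part of the vertex set `Fin a ⊕ Fin b`. -/
def liftRight (a : ℕ) {b : ℕ} (G0 : SimpleGraph (Fin b)) : SimpleGraph (Fin a ⊕ Fin b) :=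
  SimpleGraph.fromRel (fun u v => ∃ x y, u = Sum.inr x ∧ v = Sum.inr y ∧ G0.Adj x y)

open scoped Finset

namespace SimpleGraph

variable {V : Type*} {G : SimpleGraph V}

theorem containsCopy_iff_isContained {α : Type*} {F : SimpleGraph α} :
    ContainsCopy F G ↔ F ⊑ G :=
  ⟨fun ⟨f, hf⟩ ↦ ⟨⟨f, hf⟩⟩, fun ⟨f⟩ ↦ ⟨f.toHom, f.injective⟩⟩

def betweenSubgraph (G : SimpleGraph V) (s t : Set V) : G.Subgraph where
  verts := s ∪ t
  Adj := (G.between s t).Adj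
  adj_sub h := h.1
  edge_vert := by rintro v w ⟨-, ⟨hv, -⟩ | ⟨hv, -⟩⟩ <;> simp [hv]
  symm := (G.between s t).symm

theorem Copy.toSubgraph_eq_betweenSubgraph {α β : Type*}
    (f : Copy (_root_.completeBipartiteGraph α β) G) :
    f.toSubgraph = G.betweenSubgraph (Set.range (f ∘ Sum.inl)) (Set.range (f ∘ Sum.inr)) := by
  ext v w
  · simp only [Subgraph.map_verts, Subgraph.verts_top, Set.image_univ, betweenSubgraph]
    rw [← Set.Sum.elim_range, Sum.elim_comp_inl_inr]
    rfl
  · simp only [Subgraph.map_adj, betweenSubgraph, between_adj]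
    constructor
    · rintro ⟨x, y, hxy, rfl, rfl⟩
      refine ⟨f.toHom.map_adj hxy, ?_⟩
      rcases x with i | j <;> rcases y with i' | j' <;> simp_all
    · rintro ⟨-, ⟨⟨i, rfl⟩, ⟨j, rfl⟩⟩ | ⟨⟨j, rfl⟩, ⟨i, rfl⟩⟩⟩
      · exact ⟨Sum.inl i, Sum.inr j, by simp, rfl, rfl⟩
      · exact ⟨Sum.inr j, Sum.inl i, by simp, rfl, rfl⟩

variable [Fintype V] [DecidableRel G.Adj]

def commonNeighborFinset (G : SimpleGraph V) [DecidableRel G.Adj] (B : Finset V) : Finset V :=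
  {v | ∀ u ∈ B, G.Adj v u}

@[simp]
theorem mem_commonNeighborFinset {B : Finset V} {v : V} :
    v ∈ G.commonNeighborFinset B ↔ ∀ u ∈ B, G.Adj v u := by
  simp [commonNeighborFinset]

theorem coe_commonNeighborFinset (B : Finset V) :
    (G.commonNeighborFinset B : Set V) = {v | ∀ u ∈ B, G.Adj v u} := by
  ext; simp

theorem card_commonNeighborFinset_lt {α β : Type*} [Fintype α] [Fintype β]
    (hfree : ¬ completeBipartiteGraph α β ⊑ G) {B : Finset V} (hB : Fintype.card β ≤ #B) :
    #(G.commonNeighborFinset B) < Fintype.card α := by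
  by_contra! h
  obtain ⟨left, hleft, card_left⟩ := Finset.exists_subset_card_eq h
  obtain ⟨right, hright, card_right⟩ := Finset.exists_subset_card_eq hB
  refine hfree (completeBipartiteGraph_isContained_iff.mpr
    ⟨left, right, card_left, card_right, fun v hv w hw ↦ ?_⟩)
  exact mem_commonNeighborFinset.mp (hleft hv) w (hright hw)

theorem copyCountSub_completeBipartiteGraph_le {α β : Type*} [Fintype α] [Fintype β] :
    copyCountSub (completeBipartiteGraph α β) G ≤
      ∑ B ∈ Finset.univ.powersetCard (Fintype.card β),
        (#(G.commonNeighborFinset B)).choose (Fintype.card α) := by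
  classical
  set pairs := (Finset.univ.powersetCard (Fintype.card β)).sigma
    fun B ↦ (G.commonNeighborFinset B).powersetCard (Fintype.card α)
  have hcopies : {G' : G.Subgraph | Nonempty (completeBipartiteGraph α β ≃g G'.coe)} ⊆
      ↑(pairs.image fun p ↦ G.betweenSubgraph ↑p.2 ↑p.1) := by
    rw [← Copy.range_toSubgraph]
    rintro _ ⟨f, rfl⟩
    let left := Finset.univ.map ⟨f ∘ Sum.inl, f.injective.comp Sum.inl_injective⟩
    let right := Finset.univ.map ⟨f ∘ Sum.inr, f.injective.comp Sum.inr_injective⟩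
    have hleft : left ⊆ G.commonNeighborFinset right := by
      intro v hv
      obtain ⟨i, -, rfl⟩ := Finset.mem_map.mp hv
      refine mem_commonNeighborFinset.mpr fun w hw ↦ ?_
      obtain ⟨j, -, rfl⟩ := Finset.mem_map.mp hw
      exact f.toHom.map_adj (by simp)
    refine Finset.mem_image.mpr ⟨⟨right, left⟩, ?_, ?_⟩
    · simp [pairs, hleft, left, right]
    · rw [f.toSubgraph_eq_betweenSubgraph]
      simp [left, right, Function.comp_def]
  calc copyCountSub (completeBipartiteGraph α β) G
      = {G' : G.Subgraph | Nonempty (completeBipartiteGraph α β ≃g G'.coe)}.ncard :=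
        Nat.card_coe_set_eq _
    _ ≤ #(pairs.image fun p ↦ G.betweenSubgraph ↑p.2 ↑p.1) :=
        (Set.ncard_le_ncard hcopies).trans_eq (Set.ncard_coe_finset _)
    _ ≤ #pairs := Finset.card_image_le
    _ = _ := by simp [pairs, Finset.card_powersetCard]

end SimpleGraph

theorem stmt19_general (a b s t : ℕ) (htb : t ≤ b)
    {V : Type*} [Fintype V] (n : ℕ) (hcard : Fintype.card V = n)
    (G : SimpleGraph V) (hfree : ¬ ContainsCopy (Kbip s t) G) :
    copyCountSub (Kbip a b) G ≤ Nat.choose (s - 1) a * Nat.choose n b ∧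
    ∀ S : Finset V, S.card = b →
      ({v : V | ∀ u ∈ S, G.Adj v u} : Set V).ncard ≤ s - 1 := by
  classical
  have hcommon (B : Finset V) (hB : b ≤ #B) : #(G.commonNeighborFinset B) ≤ s - 1 := by
    have := card_commonNeighborFinset_lt (containsCopy_iff_isContained.not.mp hfree)
      (by simpa using htb.trans hB)
    simp only [Fintype.card_fin] at this
    omega
  refine ⟨?_, fun S hS ↦ ?_⟩
  · calc copyCountSub (Kbip a b) G
        ≤ ∑ B ∈ Finset.univ.powersetCard b, (#(G.commonNeighborFinset B)).choose a := by
          simpa using copyCountSub_completeBipartiteGraph_le (G := G) (α := Fin a) (β := Fin b)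
      _ ≤ ∑ _B ∈ Finset.univ.powersetCard b, (s - 1).choose a :=
          Finset.sum_le_sum fun B hB ↦
            Nat.choose_le_choose a (hcommon B (Finset.mem_powersetCard.1 hB).2.ge)
      _ = (s - 1).choose a * n.choose b := by
          rw [Finset.sum_const, Finset.card_powersetCard, Finset.card_univ, hcard, smul_eq_mul,
            mul_comm]
  · rw [← coe_commonNeighborFinset, Set.ncard_coe_finset]
    exact hcommon S hS.ge

/-- if `a < s ≤ t ≤ b`, then every `K_{s,t}`-free graph `G` on `n` vertices
satisfies `N(K_{a,b}, G) ≤ C(s-1,a)·C(n,b)`; in particular any set of `b` vertices has at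
most `s-1` common neighbors. -/
theorem stmt19 (a b s t : ℕ) (ha : 0 < a) (hb : 0 < b) (hs : 0 < s) (ht : 0 < t)
    (has : a < s) (hst : s ≤ t) (htb : t ≤ b)
    {V : Type*} [Fintype V] (n : ℕ) (hcard : Fintype.card V = n)
    (G : SimpleGraph V) (hfree : ¬ ContainsCopy (Kbip s t) G) :
    copyCountSub (Kbip a b) G ≤ Nat.choose (s - 1) a * Nat.choose n b ∧
    ∀ S : Finset V, S.card = b →
      ({v : V | ∀ u ∈ S, G.Adj v u} : Set V).ncard ≤ s - 1 :=
  stmt19_general a b s t htb n hcard G hfree
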